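/- arXiv:2106.06925 — 11 statements merged into one kernel-verified Lean document; each statement's English description precedes it below -/
import Mathlib

section
/- Let G = (L, R, E) be a bipartite graph with L = {b_1, ..., b_N} and R = {c_1, ..., c_M}, and consider the biclique-reduction house allocation instance constructed from G. If G contains a complete balanced bipartite subgraph K_{k,k} (i.e., there exist S ⊆ L and T ⊆ R with |S| = |T| = k such that (b, c) ∈ E for every b ∈ S and c ∈ T), then there exists an assignment φ of this instance in which at least k agents are envy-free. -/
open Classical

/-- Utility function of the biclique-reduction instance: agents are `Fin N`
(one per left vertex `b_i`), houses are `Fin M ⊕ Fin N` (`Sum.inl j` is `h_{j+1}`,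
`Sum.inr j` is `h*_{j+1}`).  Agent `i` values house `h_j` at `N` if `(b_i, c_j) ∈ E`
and at `N + j` otherwise, and values `h*_j` at `j - 1`. -/
noncomputable def bcUtil (N M : ℕ) (E : Fin N → Fin M → Prop) (i : Fin N) :
    Fin M ⊕ Fin N → ℕ
  | Sum.inl j => if E i j then N else N + (j.val + 1)
  | Sum.inr j => j.val

/-- If `G` contains a balanced biclique `K_{k,k}`, then the biclique-reduction
instance has an assignment in which at least `k` agents are envy-free. -/
theorem biclique_to_envyFree (N M k : ℕ) (E : Fin N → Fin M → Prop)
    (hbic : ∃ (S : Finset (Fin N)) (T : Finset (Fin M)),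
      S.card = k ∧ T.card = k ∧ ∀ b ∈ S, ∀ c ∈ T, E b c) :
    ∃ φ : Fin N → Fin M ⊕ Fin N, Function.Injective φ ∧
      k ≤ (Finset.univ.filter fun a : Fin N =>
        ∀ a' : Fin N, bcUtil N M E a (φ a') ≤ bcUtil N M E a (φ a)).card := by
  obtain ⟨S, T, hS, hT, hE⟩ := hbic
  have hcard : S.card = T.card := hS.trans hT.symm
  let e : {x // x ∈ S} ≃ {x // x ∈ T} := S.equivOfCardEq hcard
  let φ : Fin N → Fin M ⊕ Fin N := fun a =>
    if h : a ∈ S then Sum.inl (e ⟨a, h⟩ : Fin M) else Sum.inr a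
  refine ⟨φ, ?_, ?_⟩
  · intro a b hab
    by_cases ha : a ∈ S <;> by_cases hb : b ∈ S <;>
      simp only [φ, ha, hb, dif_pos, dif_neg, not_false_iff] at hab
    · have := e.injective (Subtype.ext (Sum.inl.inj hab))
      exact congrArg Subtype.val this
    · exact absurd hab (by simp)
    · exact absurd hab (by simp)
    · exact Sum.inr.inj hab
  · rw [← hS]
    apply Finset.card_le_card
    intro a ha
    simp only [Finset.mem_filter, Finset.mem_univ, true_and]
    intro a'
    have hφa : φ a = Sum.inl (e ⟨a, ha⟩ : Fin M) := dif_pos ha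
    have hEa : E a (e ⟨a, ha⟩ : Fin M) := hE a ha _ (e ⟨a, ha⟩).2
    have hval : bcUtil N M E a (φ a) = N := by
      rw [hφa]; simp [bcUtil, hEa]
    rw [hval]
    by_cases ha' : a' ∈ S
    · have : φ a' = Sum.inl (e ⟨a', ha'⟩ : Fin M) := dif_pos ha'
      rw [this]
      have hEa' : E a (e ⟨a', ha'⟩ : Fin M) := hE a ha _ (e ⟨a', ha'⟩).2
      simp [bcUtil, hEa']
    · have : φ a' = Sum.inr a' := dif_neg ha'
      rw [this]
      simp only [bcUtil]
      exact le_of_lt a'.isLt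
end

section
/- Let G = (L, R, E) be a bipartite graph with L = {b_1, ..., b_N} and R = {c_1, ..., c_M}, and consider the biclique-reduction house allocation instance constructed from G. If there exists an assignment φ of this instance in which at least k agents are envy-free, then there exist sets S ⊆ L and T ⊆ R with |S| = |T| = ⌊k/2⌋ such that (b, c) ∈ E for every b ∈ S and c ∈ T. -/
open Classical

/-- If some assignment of the biclique-reduction instance has at least `k`
envy-free agents, then `G` contains a balanced biclique `K_{⌊k/2⌋,⌊k/2⌋}`. -/
theorem envyFree_to_biclique (N M k : ℕ) (E : Fin N → Fin M → Prop)
    (φ : Fin N → Fin M ⊕ Fin N) (hφ : Function.Injective φ)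
    (hEF : k ≤ (Finset.univ.filter fun a : Fin N =>
      ∀ a' : Fin N, bcUtil N M E a (φ a') ≤ bcUtil N M E a (φ a)).card) :
    ∃ (S : Finset (Fin N)) (T : Finset (Fin M)),
      S.card = k / 2 ∧ T.card = k / 2 ∧ ∀ b ∈ S, ∀ c ∈ T, E b c := by
  rcases Nat.lt_or_ge k 2 with hk | hk
  · refine ⟨∅, ∅, ?_, ?_, by simp⟩ <;> · simp; omega
  set F := Finset.univ.filter fun a : Fin N =>
      ∀ a' : Fin N, bcUtil N M E a (φ a') ≤ bcUtil N M E a (φ a) with hFdef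
  have hFk : k ≤ F.card := hEF
  have hEFmem : ∀ a ∈ F, ∀ a', bcUtil N M E a (φ a') ≤ bcUtil N M E a (φ a) := by
    intro a ha; exact (Finset.mem_filter.mp ha).2
  -- every envy-free agent gets a real house
  have hreal : ∀ a ∈ F, ∃ j : Fin M, φ a = Sum.inl j := by
    intro a ha
    cases hφa : φ a with
    | inl j => exact ⟨j, rfl⟩
    | inr j =>
      exfalso
      obtain ⟨b, hb, hba⟩ := Finset.exists_mem_ne (s := F) (by omega) a
      have h1 := hEFmem a ha b
      rw [hφa] at h1
      have hjN := j.isLt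
      cases hφb : φ b with
      | inl j' =>
        rw [hφb] at h1
        simp only [bcUtil] at h1
        split at h1 <;> omega
      | inr j' =>
        rw [hφb] at h1
        have h2 := hEFmem b hb a
        rw [hφa, hφb] at h2
        simp only [bcUtil] at h1 h2
        have hjj : j = j' := Fin.ext (by omega)
        exact hba (hφ (by rw [hφa, hφb, hjj]))
  have hM : 0 < M := by
    have hpos : (0:ℕ) < F.card := by omega
    obtain ⟨a, ha⟩ := Finset.card_pos.mp hpos
    obtain ⟨j, _⟩ := hreal a ha
    exact j.pos
  let j0 : Fin M := ⟨0, hM⟩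
  let r : Fin N → Fin M := fun a =>
    if h : ∃ j, φ a = Sum.inl j then h.choose else j0
  have hr : ∀ a ∈ F, φ a = Sum.inl (r a) := by
    intro a ha
    obtain ⟨j, hj⟩ := hreal a ha
    have hex : ∃ j, φ a = Sum.inl j := ⟨j, hj⟩
    simp only [r, dif_pos hex]
    exact hex.choose_spec
  have hrinj : ∀ a ∈ F, ∀ b ∈ F, r a = r b → a = b := by
    intro a ha b hb h
    apply hφ; rw [hr a ha, hr b hb, h]
  -- key structural claim: smaller assigned house index implies an edge
  have hclaim : ∀ a ∈ F, ∀ b ∈ F, (r a).val < (r b).val → E a (r b) := by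
    intro a ha b hb hlt
    by_contra hE
    have h1 := hEFmem a ha b
    rw [hr a ha, hr b hb] at h1
    simp only [bcUtil, if_neg hE] at h1
    split at h1 <;> omega
  set q := k / 2 with hq
  set R := F.image r with hR
  have hRcard : R.card = F.card :=
    Finset.card_image_of_injOn (fun a ha b hb => hrinj a ha b hb)
  have hqn : q + q ≤ R.card := by omega
  let e := R.orderIsoOfFin (rfl : R.card = R.card)
  let lo : Fin q → Fin M := fun i =>
    (e ⟨i.val, by have := i.isLt; omega⟩ : Fin M)
  let hi : Fin q → Fin M := fun i =>
    (e ⟨R.card - q + i.val, by have := i.isLt; omega⟩ : Fin M)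
  have hlohi : ∀ i i' : Fin q, lo i < hi i' := by
    intro i i'
    have hlt : (⟨i.val, by have := i.isLt; omega⟩ : Fin R.card)
        < ⟨R.card - q + i'.val, by have := i'.isLt; omega⟩ := by
      simp only [Fin.lt_def]
      have := i.isLt; omega
    exact Subtype.coe_lt_coe.mpr (e.strictMono hlt)
  have hloinj : Function.Injective lo := by
    intro i i' h
    have h2 := e.injective (Subtype.coe_injective h)
    have h3 : i.val = i'.val := by
      have h4 := congrArg Fin.val h2
      simpa using h4
    exact Fin.ext h3
  have hhiinj : Function.Injective hi := by
    intro i i' h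
    have h2 := e.injective (Subtype.coe_injective h)
    have h3 : R.card - q + i.val = R.card - q + i'.val := by
      simpa using congrArg Fin.val h2
    exact Fin.ext (by omega)
  have hlomem : ∀ i : Fin q, lo i ∈ R := fun i =>
    (e ⟨i.val, by have := i.isLt; omega⟩).2
  have hhimem : ∀ i : Fin q, hi i ∈ R := fun i =>
    (e ⟨R.card - q + i.val, by have := i.isLt; omega⟩).2
  set Sl := Finset.image lo Finset.univ with hSl
  set T := Finset.image hi Finset.univ with hT
  have hSlcard : Sl.card = q := by
    rw [hSl, Finset.card_image_of_injective _ hloinj, Finset.card_univ, Fintype.card_fin]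
  have hTcard : T.card = q := by
    rw [hT, Finset.card_image_of_injective _ hhiinj, Finset.card_univ, Fintype.card_fin]
  set S := F.filter (fun a => r a ∈ Sl) with hS
  have hSimage : S.image r = Sl := by
    apply Finset.Subset.antisymm
    · intro x hx
      obtain ⟨a, ha, hax⟩ := Finset.mem_image.mp hx
      obtain ⟨-, ha2⟩ := Finset.mem_filter.mp ha
      rwa [← hax]
    · intro x hx
      obtain ⟨i, -, hix⟩ := Finset.mem_image.mp hx
      have hxR : x ∈ R := hix ▸ hlomem i
      obtain ⟨a, haF, hax⟩ := Finset.mem_image.mp hxR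
      exact Finset.mem_image.mpr ⟨a, Finset.mem_filter.mpr ⟨haF, hax ▸ hx⟩, hax⟩
  have hScard : S.card = q := by
    have hinj : Set.InjOn r S := by
      intro a ha b hb h
      exact hrinj a (Finset.mem_filter.mp ha).1 b (Finset.mem_filter.mp hb).1 h
    rw [← Finset.card_image_of_injOn hinj, hSimage, hSlcard]
  refine ⟨S, T, hScard, hTcard, ?_⟩
  intro b hb c hc
  obtain ⟨hbF, hbSl⟩ := Finset.mem_filter.mp hb
  obtain ⟨i, -, hib⟩ := Finset.mem_image.mp hbSl
  obtain ⟨i', -, hic⟩ := Finset.mem_image.mp hc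
  have hcR : c ∈ R := hic ▸ hhimem i'
  obtain ⟨b', hb'F, hb'c⟩ := Finset.mem_image.mp hcR
  have hlt : (r b).val < (r b').val := by
    have := hlohi i i'
    rw [hib, hic] at this
    rw [hb'c]
    exact this
  have := hclaim b hbF b' hb'F hlt
  rwa [hb'c] at this
end

section
/- Let G = (L, R, E) be a bipartite graph with L = {b_1, ..., b_N} and R = {c_1, ..., c_M}, and consider the biclique-reduction house allocation instance constructed from G. Let φ be an assignment and let A_EF be the set of agents that are envy-free in φ. If |A_EF| ≥ 2, then no agent of A_EF is assigned any of the houses h*_1, ..., h*_N, i.e., φ(A_EF) ⊆ {h_1, ..., h_M}. -/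
open Classical

/-- If at least two agents are envy-free in an assignment of the
biclique-reduction instance, then no envy-free agent receives one of the
houses `h*_1, …, h*_N`; i.e., every envy-free agent receives some house `h_j`. -/
theorem envyFree_agents_avoid_dummy_houses (N M : ℕ) (E : Fin N → Fin M → Prop)
    (φ : Fin N → Fin M ⊕ Fin N) (hφ : Function.Injective φ)
    (h2 : 2 ≤ (Finset.univ.filter fun a : Fin N =>
      ∀ a' : Fin N, bcUtil N M E a (φ a') ≤ bcUtil N M E a (φ a)).card) :
    ∀ a : Fin N, (∀ a' : Fin N, bcUtil N M E a (φ a') ≤ bcUtil N M E a (φ a)) →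
      ∃ j : Fin M, φ a = Sum.inl j := by
  intro a ha
  rcases hj : φ a with j | j
  · exact ⟨j, rfl⟩
  exfalso
  -- find another envy-free agent a' ≠ a
  have haS : a ∈ Finset.univ.filter fun a : Fin N =>
      ∀ a' : Fin N, bcUtil N M E a (φ a') ≤ bcUtil N M E a (φ a) := by
    simp [ha]
  obtain ⟨a', ha'S, hne⟩ := Finset.exists_mem_ne (lt_of_lt_of_le one_lt_two h2) a
  have ha' : ∀ b : Fin N, bcUtil N M E a' (φ b) ≤ bcUtil N M E a' (φ a') :=
    (Finset.mem_filter.mp ha'S).2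
  have h1 : bcUtil N M E a (φ a') ≤ bcUtil N M E a (φ a) := ha a'
  have h2' : bcUtil N M E a' (φ a) ≤ bcUtil N M E a' (φ a') := ha' a
  rcases hj' : φ a' with j' | j'
  · -- a' got a real house: a values it ≥ N > j
    rw [hj, hj'] at h1
    have hjN : j.val < N := j.isLt
    simp only [bcUtil] at h1
    split_ifs at h1 <;> omega
  · rw [hj, hj'] at h1 h2'
    simp only [bcUtil] at h1 h2'
    have : j = j' := Fin.ext (le_antisymm h2' h1)
    exact hne (hφ (by rw [hj, hj', this]))
end

section
/- Let G = (L, R, E) be a bipartite graph with L = {b_1, ..., b_N} and R = {c_1, ..., c_M}, and consider the biclique-reduction house allocation instance constructed from G. Let φ be an assignment, and suppose agent a_i is envy-free in φ and that house h_j is assigned to some agent under φ. If u_{a_i}(φ(a_i)) < N + j, then (b_i, c_j) ∈ E. -/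
open Classical

/-- If agent `a_i` is envy-free in an assignment `φ` of the biclique-reduction
instance, house `h_j` is assigned under `φ`, and `a_i`'s utility for her own
house is less than `N + j`, then `(b_i, c_j) ∈ E`. -/
theorem envyFree_low_utility_implies_edge (N M : ℕ) (E : Fin N → Fin M → Prop)
    (φ : Fin N → Fin M ⊕ Fin N) (hφ : Function.Injective φ)
    (i : Fin N) (j : Fin M)
    (hEF : ∀ a' : Fin N, bcUtil N M E i (φ a') ≤ bcUtil N M E i (φ i))
    (hassigned : ∃ a' : Fin N, φ a' = Sum.inl j)
    (hlt : bcUtil N M E i (φ i) < N + (j.val + 1)) :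
    E i j := by
  obtain ⟨a', ha'⟩ := hassigned
  have h := hEF a'
  rw [ha'] at h
  by_contra hE
  have h2 : bcUtil N M E i (Sum.inl j) = N + (j.val + 1) := by
    simp [bcUtil, hE]
  omega
end

section
/- Consider the coverage-reduction house allocation instance constructed from a Minimum Coverage instance (E, S_1, ..., S_d, q, ℓ). If there exists a set I ⊆ [d] with |I| = ℓ and |⋃_{t ∈ I} S_t| ≤ q, then there exists an assignment φ of this instance in which at least |E| + d − q agents are envy-free. -/
open Classical

/-- Utility function of the coverage-reduction instance built from a
Minimum Coverage instance with element set `α` and subsets `S 1, …, S d`: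
agents are `α ⊕ Fin d` (`Sum.inl e` is the element agent `a_e`, `Sum.inr t` is
the dummy agent `a*_t`), houses are `Fin d ⊕ Fin m` (`Sum.inl t` is `h*_t`,
`Sum.inr t` is the dummy house `h_t`, where `m = |E| + d - ℓ`). -/
def covUtil {α : Type*} [DecidableEq α] (d m : ℕ) (S : Fin d → Finset α) :
    α ⊕ Fin d → Fin d ⊕ Fin m → ℕ
  | Sum.inl e, Sum.inl t => if e ∈ S t then 1 else 0
  | Sum.inl _, Sum.inr _ => 0
  | Sum.inr t, Sum.inl t' => if t = t' then 1 else 0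
  | Sum.inr _, Sum.inr _ => 0

/-- If the Minimum Coverage instance has a solution `I ⊆ [d]` with `|I| = ℓ`
and `|⋃_{t ∈ I} S_t| ≤ q`, then the coverage-reduction instance has an
assignment with at least `|E| + d - q` envy-free agents. -/
theorem coverage_to_envyFree {α : Type*} [Fintype α] [DecidableEq α]
    (d q ℓ : ℕ) (S : Fin d → Finset α)
    (hq0 : 0 < q) (hqE : q ≤ Fintype.card α) (hℓ0 : 0 < ℓ) (hℓd : ℓ ≤ d)
    (hcov : ∃ I : Finset (Fin d), I.card = ℓ ∧ (I.biUnion S).card ≤ q) :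
    ∃ φ : α ⊕ Fin d → Fin d ⊕ Fin (Fintype.card α + d - ℓ),
      Function.Injective φ ∧
      Fintype.card α + d - q ≤
        (Finset.univ.filter fun a : α ⊕ Fin d =>
          ∀ a' : α ⊕ Fin d,
            covUtil d (Fintype.card α + d - ℓ) S a (φ a') ≤
              covUtil d (Fintype.card α + d - ℓ) S a (φ a)).card := by
  classical
  obtain ⟨I, hI, hU⟩ := hcov
  set m := Fintype.card α + d - ℓ with hm
  have hcard : Fintype.card (α ⊕ {t : Fin d // t ∉ I}) = m := by
    simp only [Fintype.card_sum]
    have h1 : Fintype.card {t : Fin d // t ∉ I} = d - ℓ := by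
      have := Fintype.card_subtype_compl (p := fun t : Fin d => t ∈ I)
      simpa [Fintype.card_subtype, hI] using this
    rw [h1, hm, Nat.add_sub_assoc hℓd]
  let em : α ⊕ {t : Fin d // t ∉ I} ≃ Fin m := Fintype.equivFinOfCardEq hcard
  let φ : α ⊕ Fin d → Fin d ⊕ Fin m := fun a =>
    match a with
    | Sum.inl e => Sum.inr (em (Sum.inl e))
    | Sum.inr t => if h : t ∈ I then Sum.inl t else Sum.inr (em (Sum.inr ⟨t, h⟩))
  have hinj : Function.Injective φ := by
    intro a b hab
    cases a with
    | inl e =>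
      cases b with
      | inl e' =>
        simp only [φ, Sum.inr.injEq] at hab
        exact congrArg Sum.inl (Sum.inl.inj (em.injective hab))
      | inr t =>
        by_cases ht : t ∈ I
        · simp [φ, ht] at hab
        · simp only [φ, dif_neg ht, Sum.inr.injEq] at hab
          exact absurd (em.injective hab) (by simp)
    | inr t =>
      cases b with
      | inl e' =>
        by_cases ht : t ∈ I
        · simp [φ, ht] at hab
        · simp only [φ, dif_neg ht, Sum.inr.injEq] at hab
          exact absurd (em.injective hab) (by simp)
      | inr t' =>
        by_cases ht : t ∈ I <;> by_cases ht' : t' ∈ I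
        · simp only [φ, dif_pos ht, dif_pos ht', Sum.inl.injEq] at hab
          exact congrArg Sum.inr hab
        all_goals simp only [φ, dif_pos, dif_neg, ht, ht'] at hab <;>
          first
          | (exact congrArg Sum.inr (Sum.inl.inj hab))
          | simp_all [φ]
          | (have := em.injective (Sum.inr.inj hab)
             exact congrArg Sum.inr (congrArg Subtype.val (Sum.inr.inj this)))
  refine ⟨φ, hinj, ?_⟩
  -- every agent outside `Sum.inl '' U` is envy-free
  set U := I.biUnion S with hUdef
  have hfree : ∀ a : α ⊕ Fin d, (∀ e ∈ U, a ≠ Sum.inl e) →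
      ∀ a', covUtil d m S a (φ a') ≤ covUtil d m S a (φ a) := by
    intro a ha a'
    cases a with
    | inl e =>
      have he : e ∉ U := fun h => ha e h rfl
      cases a' with
      | inl e' => simp [φ, covUtil]
      | inr t' =>
        by_cases ht' : t' ∈ I
        · have : e ∉ S t' := fun hes => he (Finset.mem_biUnion.mpr ⟨t', ht', hes⟩)
          simp [φ, ht', covUtil, this]
        · simp [φ, ht', covUtil]
    | inr t =>
      by_cases ht : t ∈ I
      · cases a' with
        | inl e' => simp [φ, ht, covUtil]
        | inr t' =>
          by_cases ht' : t' ∈ I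
          · simp only [φ, dif_pos ht, dif_pos ht', covUtil]
            split <;> simp
          · simp [φ, ht, ht', covUtil]
      · cases a' with
        | inl e' => simp [φ, ht, covUtil]
        | inr t' =>
          by_cases ht' : t' ∈ I
          · have : t ≠ t' := fun h => ht (h ▸ ht')
            simp [φ, ht, ht', covUtil, this]
          · simp [φ, ht, ht', covUtil]
  set P := fun a : α ⊕ Fin d =>
    ∀ a' : α ⊕ Fin d, covUtil d m S a (φ a') ≤ covUtil d m S a (φ a) with hP
  have hsub : Finset.univ.filter (fun a => ¬ P a) ⊆ U.image Sum.inl := by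
    intro a ha
    simp only [Finset.mem_filter, Finset.mem_univ, true_and] at ha
    by_contra hmem
    apply ha
    apply hfree
    intro e he hae
    exact hmem (hae ▸ Finset.mem_image_of_mem Sum.inl he)
  have hle : (Finset.univ.filter (fun a => ¬ P a)).card ≤ q :=
    le_trans (le_trans (Finset.card_le_card hsub) Finset.card_image_le) hU
  have hsplit : (Finset.univ.filter P).card =
      Fintype.card (α ⊕ Fin d) - (Finset.univ.filter (fun a => ¬ P a)).card := by
    have := Finset.card_filter_add_card_filter_not (s := (Finset.univ : Finset (α ⊕ Fin d))) (p := P)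
    have h2 : (Finset.univ : Finset (α ⊕ Fin d)).card = Fintype.card (α ⊕ Fin d) :=
      Finset.card_univ
    omega
  have hcard2 : Fintype.card (α ⊕ Fin d) = Fintype.card α + d := by
    simp [Fintype.card_sum]
  calc Fintype.card α + d - q
      ≤ Fintype.card α + d - (Finset.univ.filter (fun a => ¬ P a)).card :=
        Nat.sub_le_sub_left hle _
    _ = (Finset.univ.filter P).card := by rw [hsplit, hcard2]
end

section
/- Consider the coverage-reduction house allocation instance constructed from a Minimum Coverage instance (E, S_1, ..., S_d, q, ℓ). If there exists an assignment φ of this instance in which at least |E| + d − q agents are envy-free, then there exists a set I ⊆ [d] with |I| = ℓ and |⋃_{t ∈ I} S_t| ≤ q. -/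
open Classical

/-!
Let `K` be the set of indices `t` whose house `h*_t` is occupied. Only the `|E| + d - ℓ`
dummy houses lie outside `h*_K`, so `|K| ≥ ℓ`. Put `U = ⋃_{t ∈ K} S_t`. Each of the
`|U| + |K|` agents `a_e` (`e ∈ U`) and `a*_t` (`t ∈ K`) values some occupied house, so if
it is envy-free it must itself occupy a house of `h*_K`; hence at most `|K|` of them are
envy-free, and at least `|U|` of them envy someone. At most `q` agents do, so `|U| ≤ q`,
and any `ℓ` indices of `K` form the required set `I`.
-/

open Finset Function

section Occupied

variable {A H D : Type*} [Fintype A] [DecidableEq H] [DecidableEq D] {φ : A → H ⊕ D}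

def occupiedLeft (φ : A → H ⊕ D) : Finset H := (univ.image φ).toLeft

lemma mem_occupiedLeft {t : H} : t ∈ occupiedLeft φ ↔ ∃ a, φ a = .inl t := by
  simp [occupiedLeft]

lemma card_le_card_occupiedLeft_add [Fintype D] (hφ : Injective φ) :
    Fintype.card A ≤ #(occupiedLeft φ) + Fintype.card D := by
  calc Fintype.card A = #(univ.image φ) := (card_image_of_injective _ hφ).symm
    _ = #(occupiedLeft φ) + #(univ.image φ).toRight := card_toLeft_add_card_toRight.symm
    _ ≤ #(occupiedLeft φ) + Fintype.card D := by gcongr; exact card_le_univ _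

lemma card_le_card_occupiedLeft (hφ : Injective φ) {B : Finset A}
    (hB : ∀ a ∈ B, ∃ t, φ a = .inl t) : #B ≤ #(occupiedLeft φ) := by
  rw [← card_image_of_injective B hφ, ← card_map (Embedding.inl : H ↪ H ⊕ D)]
  refine card_le_card fun x hx => ?_
  obtain ⟨a, ha, rfl⟩ := mem_image.mp hx
  obtain ⟨t, ht⟩ := hB a ha
  exact mem_map.mpr ⟨t, mem_occupiedLeft.mpr ⟨a, ht⟩, ht.symm⟩

end Occupied

def envyFreeAgents {A H : Type*} [Fintype A] (u : A → H → ℕ) (φ : A → H) : Finset A :=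
  univ.filter fun a => ∀ a', u a (φ a') ≤ u a (φ a)

section Coverage

variable {α : Type*} [DecidableEq α] {d m : ℕ} {S : Fin d → Finset α}

@[simp]
lemma covUtil_inr (a : α ⊕ Fin d) (s : Fin m) : covUtil d m S a (.inr s) = 0 := by
  cases a <;> rfl

variable [Fintype α] {φ : α ⊕ Fin d → Fin d ⊕ Fin m}

lemma exists_eq_inl_of_mem_envyFreeAgents {a a' : α ⊕ Fin d}
    (ha : a ∈ envyFreeAgents (covUtil d m S) φ) (hpos : 0 < covUtil d m S a (φ a')) :
    ∃ t, φ a = .inl t := by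
  rcases h : φ a with t | s
  · exact ⟨t, rfl⟩
  · have := (mem_filter.mp ha).2 a'
    simp only [h, covUtil_inr] at this
    omega

lemma exists_pos_covUtil_of_mem_disjSum {a : α ⊕ Fin d}
    (ha : a ∈ ((occupiedLeft φ).biUnion S).disjSum (occupiedLeft φ)) :
    ∃ a', 0 < covUtil d m S a (φ a') := by
  rcases mem_disjSum.mp ha with ⟨e, he, rfl⟩ | ⟨t, ht, rfl⟩
  · obtain ⟨t, ht, heS⟩ := mem_biUnion.mp he
    obtain ⟨a', ha'⟩ := mem_occupiedLeft.mp ht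
    exact ⟨a', by simp [ha', covUtil, heS]⟩
  · obtain ⟨a', ha'⟩ := mem_occupiedLeft.mp ht
    exact ⟨a', by simp [ha', covUtil]⟩

lemma card_biUnion_occupiedLeft_add_card_envyFreeAgents_le (hφ : Injective φ) :
    #((occupiedLeft φ).biUnion S) + #(envyFreeAgents (covUtil d m S) φ) ≤
      Fintype.card α + d := by
  set K := occupiedLeft φ
  set EF := envyFreeAgents (covUtil d m S) φ
  set W := (K.biUnion S).disjSum K
  have hEF : #(W ∩ EF) ≤ #K := card_le_card_occupiedLeft hφ fun a ha => by
    obtain ⟨a', hpos⟩ := exists_pos_covUtil_of_mem_disjSum (mem_inter.mp ha).1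
    exact exists_eq_inl_of_mem_envyFreeAgents (mem_inter.mp ha).2 hpos
  have hnotEF : #(W \ EF) ≤ #EFᶜ := card_le_card (sdiff_subset_sdiff (subset_univ W) le_rfl)
  have hW : #(W ∩ EF) + #(W \ EF) = #(K.biUnion S) + #K := by
    rw [card_inter_add_card_sdiff, card_disjSum]
  have hcompl : #EFᶜ + #EF = Fintype.card α + d := by
    rw [card_compl_add_card, Fintype.card_sum, Fintype.card_fin]
  omega

end Coverage

theorem envyFree_to_coverage_general {α : Type*} [Fintype α] [DecidableEq α]
    (d q ℓ : ℕ) (S : Fin d → Finset α)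
    (hℓd : ℓ ≤ d)
    (φ : α ⊕ Fin d → Fin d ⊕ Fin (Fintype.card α + d - ℓ))
    (hφ : Function.Injective φ)
    (hEF : Fintype.card α + d - q ≤
      (Finset.univ.filter fun a : α ⊕ Fin d =>
        ∀ a' : α ⊕ Fin d,
          covUtil d (Fintype.card α + d - ℓ) S a (φ a') ≤
            covUtil d (Fintype.card α + d - ℓ) S a (φ a)).card) :
    ∃ I : Finset (Fin d), I.card = ℓ ∧ (I.biUnion S).card ≤ q := by
  have hK : ℓ ≤ #(occupiedLeft φ) := by
    have := card_le_card_occupiedLeft_add hφ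
    simp only [Fintype.card_sum, Fintype.card_fin] at this
    omega
  have hU : #((occupiedLeft φ).biUnion S) ≤ q := by
    have := card_biUnion_occupiedLeft_add_card_envyFreeAgents_le (S := S) hφ
    unfold envyFreeAgents at this
    omega
  obtain ⟨I, hIK, hI⟩ := exists_subset_card_eq hK
  exact ⟨I, hI, (card_le_card (biUnion_subset_biUnion_of_subset_left S hIK)).trans hU⟩

/-- If the coverage-reduction instance has an assignment with at least
`|E| + d - q` envy-free agents, then the Minimum Coverage instance has a
solution `I ⊆ [d]` with `|I| = ℓ` and `|⋃_{t ∈ I} S_t| ≤ q`. -/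
theorem envyFree_to_coverage {α : Type*} [Fintype α] [DecidableEq α]
    (d q ℓ : ℕ) (S : Fin d → Finset α)
    (hq0 : 0 < q) (hqE : q ≤ Fintype.card α) (hℓ0 : 0 < ℓ) (hℓd : ℓ ≤ d)
    (φ : α ⊕ Fin d → Fin d ⊕ Fin (Fintype.card α + d - ℓ))
    (hφ : Function.Injective φ)
    (hEF : Fintype.card α + d - q ≤
      (Finset.univ.filter fun a : α ⊕ Fin d =>
        ∀ a' : α ⊕ Fin d,
          covUtil d (Fintype.card α + d - ℓ) S a (φ a') ≤
            covUtil d (Fintype.card α + d - ℓ) S a (φ a)).card) :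
    ∃ I : Finset (Fin d), I.card = ℓ ∧ (I.biUnion S).card ≤ q :=
  envyFree_to_coverage_general d q ℓ S hℓd φ hφ hEF
end

section
/- Consider the coverage-reduction house allocation instance constructed from a Minimum Coverage instance (E, S_1, ..., S_d, q, ℓ), and let k be a positive integer. If there exists an assignment φ with at least k envy-free agents, then there exists an assignment σ with at least k envy-free agents that additionally satisfies: for every t ∈ [d], if house h*_t is assigned under σ, then it is assigned to agent a*_t. -/
open Classical

section Aux
variable {α : Type*} [DecidableEq α]

lemma covUtil_le_one (d m : ℕ) (S : Fin d → Finset α)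
    (a : α ⊕ Fin d) (h : Fin d ⊕ Fin m) : covUtil d m S a h ≤ 1 := by
  rcases a with e | t <;> rcases h with t' | t' <;> simp [covUtil] <;> split <;> simp

variable [Fintype α]

lemma covAux (d m k : ℕ) (S : Fin d → Finset α) :
    ∀ n (φ : α ⊕ Fin d → Fin d ⊕ Fin m),
      (Finset.univ.filter fun t : Fin d =>
        (∃ a, φ a = Sum.inl t) ∧ φ (Sum.inr t) ≠ Sum.inl t).card ≤ n →
      Function.Injective φ →
      k ≤ (Finset.univ.filter fun a : α ⊕ Fin d =>
        ∀ a', covUtil d m S a (φ a') ≤ covUtil d m S a (φ a)).card →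
      ∃ σ : α ⊕ Fin d → Fin d ⊕ Fin m,
        Function.Injective σ ∧
        k ≤ (Finset.univ.filter fun a : α ⊕ Fin d =>
          ∀ a', covUtil d m S a (σ a') ≤ covUtil d m S a (σ a)).card ∧
        ∀ t : Fin d, (∃ a, σ a = Sum.inl t) → σ (Sum.inr t) = Sum.inl t := by
  intro n
  induction n with
  | zero =>
    intro φ hcard hφ hEF
    refine ⟨φ, hφ, hEF, ?_⟩
    intro t ht
    by_contra hne
    have hmem : t ∈ (Finset.univ.filter fun t : Fin d =>
        (∃ a, φ a = Sum.inl t) ∧ φ (Sum.inr t) ≠ Sum.inl t) :=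
      Finset.mem_filter.mpr ⟨Finset.mem_univ _, ht, hne⟩
    have := Finset.card_pos.mpr ⟨t, hmem⟩
    omega
  | succ n ih =>
    intro φ hcard hφ hEF
    set Bad := Finset.univ.filter fun t : Fin d =>
        (∃ a, φ a = Sum.inl t) ∧ φ (Sum.inr t) ≠ Sum.inl t with hBad
    rcases Bad.eq_empty_or_nonempty with hB | ⟨t, ht⟩
    · refine ⟨φ, hφ, hEF, ?_⟩
      intro t h
      by_contra hne
      have hmem : t ∈ Bad := Finset.mem_filter.mpr ⟨Finset.mem_univ _, h, hne⟩
      simp [hB] at hmem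
    · rw [hBad, Finset.mem_filter] at ht
      obtain ⟨-, ⟨a, ha⟩, hnt⟩ := ht
      set e : (Fin d ⊕ Fin m) ≃ (Fin d ⊕ Fin m) :=
        Equiv.swap (φ (Sum.inr t)) (Sum.inl t) with he
      set σ : α ⊕ Fin d → Fin d ⊕ Fin m := fun b => e (φ b) with hσ
      have hσdef : ∀ b, σ b = Equiv.swap (φ (Sum.inr t)) (Sum.inl t) (φ b) :=
        fun b => rfl
      have hσinj : Function.Injective σ := e.injective.comp hφ
      have hant : a ≠ Sum.inr t := by
        intro h; rw [h] at ha; exact hnt ha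
      have hσt : σ (Sum.inr t) = Sum.inl t := by
        rw [hσdef, Equiv.swap_apply_left]
      have hnotEF : ¬ (∀ a', covUtil d m S (Sum.inr t) (φ a') ≤
          covUtil d m S (Sum.inr t) (φ (Sum.inr t))) := by
        intro h
        have h1 := h a
        rw [ha] at h1
        rcases hft : φ (Sum.inr t) with t' | t'
        · have htt : t ≠ t' := fun hh => hnt (by rw [hft, hh])
          rw [hft] at h1
          simp [covUtil, htt] at h1
        · rw [hft] at h1; simp [covUtil] at h1
      have hEFσ : k ≤ (Finset.univ.filter fun b : α ⊕ Fin d =>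
          ∀ a', covUtil d m S b (σ a') ≤ covUtil d m S b (σ b)).card := by
        set Fφ := Finset.univ.filter fun b : α ⊕ Fin d =>
          ∀ a', covUtil d m S b (φ a') ≤ covUtil d m S b (φ b) with hFφ
        set Fσ := Finset.univ.filter fun b : α ⊕ Fin d =>
          ∀ a', covUtil d m S b (σ a') ≤ covUtil d m S b (σ b) with hFσ
        have hsub : insert (Sum.inr t) (Fφ.erase a) ⊆ Fσ := by
          intro b hb
          rcases Finset.mem_insert.mp hb with rfl | hb
          · rw [hFσ, Finset.mem_filter]
            refine ⟨Finset.mem_univ _, fun a' => ?_⟩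
            rw [hσt]
            calc covUtil d m S (Sum.inr t) (σ a') ≤ 1 := covUtil_le_one d m S _ _
              _ = covUtil d m S (Sum.inr t) (Sum.inl t) := by simp [covUtil]
          · obtain ⟨hba, hbF⟩ := Finset.mem_erase.mp hb
            rw [hFφ, Finset.mem_filter] at hbF
            have hbrt : b ≠ Sum.inr t := by
              intro hh; rw [hh] at hbF; exact hnotEF hbF.2
            have hσb : σ b = φ b := by
              rw [hσdef, Equiv.swap_apply_of_ne_of_ne]
              · exact fun hh => hbrt (hφ hh)
              · rw [← ha]; exact fun hh => hba (hφ hh)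
            rw [hFσ, Finset.mem_filter]
            refine ⟨Finset.mem_univ _, fun a' => ?_⟩
            rw [hσb, hσdef a']
            rcases eq_or_ne (φ a') (φ (Sum.inr t)) with hh | hh
            · rw [hh, Equiv.swap_apply_left, ← ha]
              exact hbF.2 a
            · rcases eq_or_ne (φ a') (Sum.inl t) with hh2 | hh2
              · rw [hh2, Equiv.swap_apply_right]
                exact hbF.2 (Sum.inr t)
              · rw [Equiv.swap_apply_of_ne_of_ne hh hh2]
                exact hbF.2 a'
        have hnotmem : Sum.inr t ∉ Fφ.erase a := by
          intro hh
          have := (Finset.mem_erase.mp hh).2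
          rw [hFφ, Finset.mem_filter] at this
          exact hnotEF this.2
        have h1 : (Fφ.erase a).card + 1 ≤ Fσ.card := by
          have := Finset.card_le_card hsub
          rwa [Finset.card_insert_of_notMem hnotmem] at this
        have h2 : Fφ.card - 1 ≤ (Fφ.erase a).card := by
          by_cases hm : a ∈ Fφ
          · rw [Finset.card_erase_of_mem hm]
          · rw [Finset.erase_eq_of_notMem hm]; omega
        omega
      have hBadσ : (Finset.univ.filter fun t' : Fin d =>
          (∃ b, σ b = Sum.inl t') ∧ σ (Sum.inr t') ≠ Sum.inl t').card ≤ n := by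
        have hsub : (Finset.univ.filter fun t' : Fin d =>
            (∃ b, σ b = Sum.inl t') ∧ σ (Sum.inr t') ≠ Sum.inl t') ⊆ Bad.erase t := by
          intro t' ht'
          rw [Finset.mem_filter] at ht'
          obtain ⟨-, ⟨b, hb⟩, hnt'⟩ := ht'
          have htne : t' ≠ t := by
            intro hh; rw [hh] at hnt'; exact hnt' hσt
          have hlne : (Sum.inl t' : Fin d ⊕ Fin m) ≠ Sum.inl t :=
            fun hh => htne (Sum.inl_injective hh)
          refine Finset.mem_erase.mpr ⟨htne, ?_⟩
          rw [hBad, Finset.mem_filter]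
          refine ⟨Finset.mem_univ _, ?_, ?_⟩
          · rcases eq_or_ne (Sum.inl t' : Fin d ⊕ Fin m) (φ (Sum.inr t)) with hh | hh
            · exact ⟨Sum.inr t, hh.symm⟩
            · refine ⟨b, e.injective ?_⟩
              have hfix : e (Sum.inl t') = Sum.inl t' := by
                rw [he]; exact Equiv.swap_apply_of_ne_of_ne hh hlne
              rw [hfix]
              exact hb
          · intro hh
            have h1 : (Sum.inl t' : Fin d ⊕ Fin m) ≠ φ (Sum.inr t) := by
              intro h2
              have := hφ (hh.trans h2)
              simp at this
              exact htne this
            apply hnt'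
            rw [hσdef, hh]
            exact Equiv.swap_apply_of_ne_of_ne h1 hlne
        have htB : t ∈ Bad := by
          rw [hBad, Finset.mem_filter]; exact ⟨Finset.mem_univ _, ⟨a, ha⟩, hnt⟩
        have := Finset.card_erase_of_mem htB
        have := Finset.card_le_card hsub
        omega
      exact ih σ hBadσ hσinj hEFσ

end Aux

/-- If the coverage-reduction instance has an assignment `φ` with at least `k`
envy-free agents, then it also has an assignment `σ` with at least `k`
envy-free agents in which every assigned house `h*_t` is assigned to
the corresponding agent `a*_t`. -/
theorem exists_normalized_assignment {α : Type*} [Fintype α] [DecidableEq α]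
    (d q ℓ k : ℕ) (S : Fin d → Finset α)
    (hq0 : 0 < q) (hqE : q ≤ Fintype.card α) (hℓ0 : 0 < ℓ) (hℓd : ℓ ≤ d)
    (hk : 0 < k)
    (φ : α ⊕ Fin d → Fin d ⊕ Fin (Fintype.card α + d - ℓ))
    (hφ : Function.Injective φ)
    (hEF : k ≤ (Finset.univ.filter fun a : α ⊕ Fin d =>
      ∀ a' : α ⊕ Fin d,
        covUtil d (Fintype.card α + d - ℓ) S a (φ a') ≤
          covUtil d (Fintype.card α + d - ℓ) S a (φ a)).card) :
    ∃ σ : α ⊕ Fin d → Fin d ⊕ Fin (Fintype.card α + d - ℓ),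
      Function.Injective σ ∧
      k ≤ (Finset.univ.filter fun a : α ⊕ Fin d =>
        ∀ a' : α ⊕ Fin d,
          covUtil d (Fintype.card α + d - ℓ) S a (σ a') ≤
            covUtil d (Fintype.card α + d - ℓ) S a (σ a)).card ∧
      ∀ t : Fin d, (∃ a : α ⊕ Fin d, σ a = Sum.inl t) → σ (Sum.inr t) = Sum.inl t := by
  exact covAux d (Fintype.card α + d - ℓ) k S
    ((Finset.univ.filter fun t : Fin d =>
        (∃ a, φ a = Sum.inl t) ∧ φ (Sum.inr t) ≠ Sum.inl t).card) φ le_rfl hφ hEF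
end

section
/- Consider the X3C-reduction house allocation instance constructed from an Exact 3-Set Cover instance. If there exist k = N/3 subsets S_{p_1}, ..., S_{p_k} among S_1, ..., S_M whose union is the entire universe V, then this instance admits a proportional assignment. -/
/-!
An exact cover makes `(j, ℓ) ↦ e_j^ℓ` a bijection from its triples onto the universe, so each
`a_i` can receive the house `h^ℓ_j` of its own element (utility `8T`), and each `a*_k` the
house `h*_k`. Among the assigned `h`-houses, `a_i` values only the three of its own triple, at
`8T + (6T - j) + (5T + j) = 19T`; the `T` houses `h*` add `T C = T (8T + 8N - 19)`. The total is
`8T (N + T)`, exactly `n = N + T` times its own utility. An agent `a*_k` gets `1` out of a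
total of `T ≤ n`.
-/

/-- Utility function of the X3C-reduction instance: the universe is `Fin N`,
the `M` size-3 subsets are given by their ordered elements `e j 0, e j 1, e j 2`.
With `T = 100 * (M + N)` and `C = 8 * T + 8 * N - 19`, the agents are
`Fin N ⊕ Fin T` (`Sum.inl i` is `a_i`, `Sum.inr i` is `a*_i`) and the houses are
`(Fin M × Fin 3) ⊕ Fin T` (`Sum.inl (j, ℓ)` is `h^ℓ_j`, `Sum.inr j` is `h*_j`). -/
def xUtil (N M : ℕ) (e : Fin M → Fin 3 → Fin N) :
    Fin N ⊕ Fin (100 * (M + N)) → (Fin M × Fin 3) ⊕ Fin (100 * (M + N)) → ℕ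
  | Sum.inl i, Sum.inl (j, ℓ) =>
      if e j ℓ = i then 8 * (100 * (M + N))
      else if e j (ℓ + 1) = i then 6 * (100 * (M + N)) - (j.val + 1)
      else if e j (ℓ + 2) = i then 5 * (100 * (M + N)) + (j.val + 1)
      else 0
  | Sum.inl _, Sum.inr _ => 8 * (100 * (M + N)) + 8 * N - 19
  | Sum.inr _, Sum.inl _ => 0
  | Sum.inr _, Sum.inr _ => 1

/-- Agent `a` is proportional in assignment `φ`: her utility for her own house
is at least `1/n` times her total utility for all assigned houses. -/
def propAgent {A H : Type*} [Fintype A] (u : A → H → ℕ) (φ : A → H) (a : A) : Prop :=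
  ((u a (φ a) : ℝ)) ≥ (1 / (Fintype.card A : ℝ)) * ∑ a' : A, (u a (φ a') : ℝ)

open Finset Function

theorem propAgent_of_sum_le {A H : Type*} [Fintype A] {u : A → H → ℕ} {φ : A → H} {a : A}
    (h : ∑ a', u a (φ a') ≤ Fintype.card A * u a (φ a)) : propAgent u φ a := by
  have hA : (0 : ℝ) < Fintype.card A := by exact_mod_cast Fintype.card_pos_iff.2 ⟨a⟩
  rw [propAgent, ge_iff_le, one_div, inv_mul_le_iff₀ hA]
  exact_mod_cast h

section X3C

variable {N M : ℕ} {e : Fin M → Fin 3 → Fin N}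

theorem bijective_of_cover_of_card_eq {P : Finset (Fin M)} (hP : P.card = N / 3)
    (hcov : ∀ i : Fin N, ∃ j ∈ P, ∃ ℓ, e j ℓ = i) :
    Bijective fun p : P × Fin 3 => e p.1 p.2 := by
  have hsurj : Surjective fun p : P × Fin 3 => e p.1 p.2 := fun i => by
    obtain ⟨j, hj, ℓ, rfl⟩ := hcov i
    exact ⟨(⟨j, hj⟩, ℓ), rfl⟩
  refine (Fintype.bijective_iff_surjective_and_card _).2 ⟨hsurj, ?_⟩
  refine le_antisymm ?_ (Fintype.card_le_of_surjective _ hsurj)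
  simpa [hP] using Nat.div_mul_le_self N 3

theorem sum_xUtil_triple {j : Fin M} (hinj : Injective (e j)) (ℓ₀ : Fin 3) :
    ∑ ℓ, xUtil N M e (.inl (e j ℓ₀)) (.inl (j, ℓ)) = 19 * (100 * (M + N)) := by
  rw [← Equiv.sum_comp (Equiv.addLeft ℓ₀), Fin.sum_univ_three]
  have h3 : ℓ₀ + 1 + 2 = ℓ₀ := by revert ℓ₀; decide
  simp only [xUtil, Fin.isValue, Equiv.coe_addLeft, add_zero, ↓reduceIte, hinj.eq_iff,
    add_eq_left, one_ne_zero, add_assoc, Fin.reduceAdd, Fin.reduceEq, h3]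
  have hj := j.isLt
  omega

theorem xUtil_eq_zero_of_forall_ne {i : Fin N} {j : Fin M} (hne : ∀ ℓ, e j ℓ ≠ i)
    (ℓ : Fin 3) :
    xUtil N M e (.inl i) (.inl (j, ℓ)) = 0 := by
  simp [xUtil, hne]

variable {P : Finset (Fin M)}

def coverAssignment (σ : P × Fin 3 ≃ Fin N) (T : ℕ) :
    Fin N ⊕ Fin T → (Fin M × Fin 3) ⊕ Fin T :=
  Sum.map (fun i => ((σ.symm i).1.1, (σ.symm i).2)) id

theorem coverAssignment_injective (σ : P × Fin 3 ≃ Fin N) (T : ℕ) :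
    Injective (coverAssignment σ T) :=
  ((Subtype.val_injective.prodMap injective_id).comp σ.symm.injective).sumMap injective_id

theorem sum_xUtil_cover (σ : P × Fin 3 ≃ Fin N) (hσ : ∀ p, σ p = e p.1 p.2)
    (hinj : ∀ j, Injective (e j)) (i : Fin N) :
    ∑ i', xUtil N M e (.inl i) (.inl ((σ.symm i').1.1, (σ.symm i').2)) =
      19 * (100 * (M + N)) := by
  rw [← Equiv.sum_comp σ, Fintype.sum_prod_type, Fintype.sum_eq_single (σ.symm i).1]
  · simp only [Equiv.symm_apply_apply]
    have key := sum_xUtil_triple (hinj (σ.symm i).1) (σ.symm i).2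
    rwa [← hσ, Equiv.apply_symm_apply] at key
  · intro j hj
    simp only [Equiv.symm_apply_apply]
    refine Finset.sum_eq_zero fun ℓ _ => xUtil_eq_zero_of_forall_ne (fun ℓ h => hj ?_) ℓ
    rw [← h, ← hσ (j, ℓ), Equiv.symm_apply_apply]

theorem propAgent_coverAssignment_inl (σ : P × Fin 3 ≃ Fin N) (hσ : ∀ p, σ p = e p.1 p.2)
    (hinj : ∀ j, Injective (e j)) (i : Fin N) :
    propAgent (xUtil N M e) (coverAssignment σ _) (.inl i) := by
  have hown : e (σ.symm i).1 (σ.symm i).2 = i := by rw [← hσ, Equiv.apply_symm_apply]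
  apply propAgent_of_sum_le
  simp only [Fintype.sum_sum_type, coverAssignment, Sum.map_inl, Sum.map_inr, id,
    sum_xUtil_cover σ hσ hinj, Fintype.card_sum, Fintype.card_fin]
  simp only [xUtil, hown, ↓reduceIte, sum_const, card_univ, Fintype.card_fin, smul_eq_mul]
  have hC : 8 * (100 * (M + N)) + 8 * N - 19 + 19 = 8 * (100 * (M + N)) + 8 * N := by
    have hN := i.pos
    omega
  generalize 100 * (M + N) = T at hC ⊢
  generalize 8 * T + 8 * N - 19 = C at hC ⊢
  apply le_of_eq
  calc 19 * T + T * C = T * (C + 19) := by ring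
    _ = (N + T) * (8 * T) := by rw [hC]; ring

theorem propAgent_coverAssignment_inr (σ : P × Fin 3 ≃ Fin N) (k : Fin (100 * (M + N))) :
    propAgent (xUtil N M e) (coverAssignment σ _) (.inr k) := by
  apply propAgent_of_sum_le
  simp [Fintype.sum_sum_type, coverAssignment, xUtil]

end X3C

theorem x3c_to_proportional_general (N M : ℕ)
    (e : Fin M → Fin 3 → Fin N) (hinj : ∀ j, Function.Injective (e j))
    (hcov : ∃ P : Finset (Fin M), P.card = N / 3 ∧
      ∀ i : Fin N, ∃ j ∈ P, ∃ ℓ : Fin 3, e j ℓ = i) :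
    ∃ φ : Fin N ⊕ Fin (100 * (M + N)) → (Fin M × Fin 3) ⊕ Fin (100 * (M + N)),
      Function.Injective φ ∧ ∀ a, propAgent (xUtil N M e) φ a := by
  obtain ⟨P, hP, hPcov⟩ := hcov
  let σ := Equiv.ofBijective _ (bijective_of_cover_of_card_eq hP hPcov)
  refine ⟨coverAssignment σ _, coverAssignment_injective σ _, ?_⟩
  rintro (i | k)
  · exact propAgent_coverAssignment_inl σ (fun _ => rfl) hinj i
  · exact propAgent_coverAssignment_inr σ k

/-- If `N/3` of the subsets cover the whole universe, then the X3C-reduction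
instance admits a proportional assignment. -/
theorem x3c_to_proportional (N M : ℕ) (hN : 3 ∣ N)
    (e : Fin M → Fin 3 → Fin N) (hinj : ∀ j, Function.Injective (e j))
    (hcov : ∃ P : Finset (Fin M), P.card = N / 3 ∧
      ∀ i : Fin N, ∃ j ∈ P, ∃ ℓ : Fin 3, e j ℓ = i) :
    ∃ φ : Fin N ⊕ Fin (100 * (M + N)) → (Fin M × Fin 3) ⊕ Fin (100 * (M + N)),
      Function.Injective φ ∧ ∀ a, propAgent (xUtil N M e) φ a :=
  x3c_to_proportional_general N M e hinj hcov
end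

section
/- Consider the X3C-reduction house allocation instance constructed from an Exact 3-Set Cover instance. If this instance admits a proportional assignment, then there exist k = N/3 subsets among S_1, ..., S_M whose union is the entire universe V. -/
/-!
A dummy agent `a*_t` values set houses at `0` and dummy houses at `1`, so she can only be
proportional with a dummy house (the `N + T` agents cannot all fit into the `3M` set houses).
Hence the dummies fill all `T` dummy houses and every element agent `a_i` gets a set house.
Since `C` is just below `8T + 8N`, proportionality of `a_i` forces her house to be one she owns
(utility `8T`) and bounds her total utility for the houses of the other element agents by `19T`.
Each set house is worth exactly `19T` to the element agents altogether, so all these bounds are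
equalities, and the tie-breaking terms `± (j + 1)` then force the occupied houses to come in whole
triples `h^0_j, h^1_j, h^2_j`; the corresponding sets form an exact cover.
-/

open Finset Function

lemma propAgent_iff {A H : Type*} [Fintype A] (u : A → H → ℕ) (φ : A → H) (a : A) :
    propAgent u φ a ↔ ∑ a', u a (φ a') ≤ Fintype.card A * u a (φ a) := by
  have hA : (0 : ℝ) < Fintype.card A := by exact_mod_cast Fintype.card_pos_iff.2 ⟨a⟩
  rw [propAgent, ge_iff_le, one_div, inv_mul_le_iff₀ hA]
  exact_mod_cast Iff.rfl

lemma Finset.exists_eq_sum_of_sum_lt_two_mul {ι : Type*} {s : Finset ι} {f : ι → ℕ} {L : ℕ}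
    (hf : ∀ i ∈ s, f i = 0 ∨ L ≤ f i) (hlt : ∑ i ∈ s, f i < 2 * L) (hne : ∑ i ∈ s, f i ≠ 0) :
    ∃ i ∈ s, f i = ∑ i ∈ s, f i := by
  classical
  obtain ⟨i, hi, hfi⟩ := exists_ne_zero_of_sum_ne_zero hne
  refine ⟨i, hi, ?_⟩
  rw [← add_sum_erase s f hi]
  by_contra hrest
  obtain ⟨k, hk, hfk⟩ := exists_ne_zero_of_sum_ne_zero (by omega : ∑ x ∈ s.erase i, f x ≠ 0)
  have hk_le : f k ≤ ∑ x ∈ s.erase i, f x := single_le_sum (fun _ _ ↦ Nat.zero_le _) hk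
  rw [← add_sum_erase s f hi] at hlt
  have := (hf i hi).resolve_left hfi
  have := (hf k (mem_of_mem_erase hk)).resolve_left hfk
  omega

lemma Finset.card_eq_card_image_fst_mul {α β : Type*} [DecidableEq α] [Fintype β]
    (s : Finset (α × β)) (hs : ∀ p ∈ s, ∀ b, (p.1, b) ∈ s) :
    #s = #(s.image Prod.fst) * Fintype.card β := by
  suffices s = s.image Prod.fst ×ˢ univ by
    conv_lhs => rw [this]
    rw [card_product, card_univ]
  ext ⟨a, b⟩
  simp only [mem_product, mem_image, mem_univ, and_true]
  exact ⟨fun h ↦ ⟨(a, b), h, rfl⟩, fun ⟨p, hp, hpa⟩ ↦ hpa ▸ hs p hp b⟩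

lemma Function.Injective.exists_inl_of_forall_inr {α β γ : Type*} [Finite β]
    {φ : α ⊕ β → γ ⊕ β} (hφ : Injective φ) (h : ∀ b, ∃ b', φ (.inr b) = .inr b') (a : α) :
    ∃ c, φ (.inl a) = .inl c := by
  choose f hf using h
  have hf_surj : Surjective f :=
    Finite.surjective_of_injective fun b b' hbb' ↦ Sum.inr_injective (hφ (by rw [hf, hf, hbb']))
  rcases hφa : φ (.inl a) with c | b
  · exact ⟨c, rfl⟩
  · obtain ⟨b', rfl⟩ := hf_surj b
    exact absurd (hφ (hφa.trans (hf b').symm)) Sum.inl_ne_inr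

lemma Finset.mk_mem_of_add_two_mem {α : Type*} {s : Finset (α × Fin 3)}
    (hs : ∀ a ℓ, (a, ℓ) ∈ s → (a, ℓ + 2) ∈ s) {a : α} {ℓ : Fin 3} (h : (a, ℓ) ∈ s) (ℓ' : Fin 3) :
    (a, ℓ') ∈ s := by
  have h₂ := hs _ _ h
  have h₄ := hs _ _ h₂
  obtain rfl | rfl | rfl : ℓ' = ℓ ∨ ℓ' = ℓ + 2 ∨ ℓ' = ℓ + 2 + 2 := by omega
  exacts [h, h₂, h₄]

section X3C

variable {N M : ℕ} {e : Fin M → Fin 3 → Fin N}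

local notation "T" => 100 * (M + N)
local notation "C" => 8 * T + 8 * N - 19

lemma mul_C_add_eq (hN : 0 < N) : T * C + 19 * T = (N + T) * (8 * T) := by
  zify [show 19 ≤ 8 * T + 8 * N by omega]
  ring

lemma xUtil_of_owner {i : Fin N} {p : Fin M × Fin 3} (h : e p.1 p.2 = i) :
    xUtil N M e (.inl i) (.inl p) = 8 * T := by
  simp [xUtil, h]

lemma xUtil_of_not_owner {i : Fin N} {p : Fin M × Fin 3} (h : e p.1 p.2 ≠ i) :
    xUtil N M e (.inl i) (.inl p) = 0 ∨
      5 * T < xUtil N M e (.inl i) (.inl p) ∧ xUtil N M e (.inl i) (.inl p) ≤ 6 * T := by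
  have := p.1.isLt
  simp only [xUtil, if_neg h]
  split_ifs <;> omega

lemma xUtil_of_succ_owner {j : Fin M} (hinj : Injective (e j)) (ℓ : Fin 3) :
    xUtil N M e (.inl (e j (ℓ + 1))) (.inl (j, ℓ)) = 6 * T - (j.val + 1) := by
  have : ℓ ≠ ℓ + 1 := by omega
  simp [xUtil, hinj.ne this]

lemma eq_of_xUtil_eq {i : Fin N} {p : Fin M × Fin 3} {j : Fin M}
    (h : xUtil N M e (.inl i) (.inl p) = 5 * T + (j.val + 1)) : p.1 = j ∧ e j (p.2 + 2) = i := by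
  have := p.1.isLt
  have := j.isLt
  simp only [xUtil] at h
  split_ifs at h with h₀ h₁ h₂ <;> try omega
  obtain rfl : p.1 = j := Fin.ext (by omega)
  exact ⟨rfl, h₂⟩

lemma sum_xUtil_house {p : Fin M × Fin 3} (hinj : Injective (e p.1)) :
    ∑ i, xUtil N M e (.inl i) (.inl p) = 19 * T := by
  obtain ⟨j, ℓ⟩ := p
  dsimp only at hinj
  have hne : ℓ ≠ ℓ + 1 ∧ ℓ ≠ ℓ + 2 ∧ ℓ + 1 ≠ ℓ + 2 := by omega
  have hsplit : ∀ i, xUtil N M e (.inl i) (.inl (j, ℓ)) =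
      (if e j ℓ = i then 8 * T else 0) + (if e j (ℓ + 1) = i then 6 * T - (j.val + 1) else 0) +
        (if e j (ℓ + 2) = i then 5 * T + (j.val + 1) else 0) := by
    intro i
    have := j.isLt
    have := hinj.ne hne.1
    have := hinj.ne hne.2.1
    have := hinj.ne hne.2.2
    simp only [xUtil]
    split_ifs <;> omega
  simp only [hsplit, sum_add_distrib, sum_ite_eq, mem_univ, if_true]
  have := j.isLt
  omega

variable {φ : Fin N ⊕ Fin (100 * (M + N)) → (Fin M × Fin 3) ⊕ Fin (100 * (M + N))}

lemma sum_xUtil_le_of_propAgent {a : Fin N ⊕ Fin T} (h : propAgent (xUtil N M e) φ a) :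
    ∑ a', xUtil N M e a (φ a') ≤ (N + T) * xUtil N M e a (φ a) := by
  simpa using (propAgent_iff _ φ a).1 h

lemma exists_inr_of_propAgent (hφ : Injective φ) (hprop : ∀ a, propAgent (xUtil N M e) φ a)
    (t : Fin T) : ∃ s, φ (.inr t) = .inr s := by
  rcases hφt : φ (.inr t) with p | s
  · exfalso
    have hsum := sum_xUtil_le_of_propAgent (hprop (.inr t))
    simp only [hφt, xUtil, mul_zero, nonpos_iff_eq_zero, sum_eq_zero_iff, mem_univ,
      true_implies] at hsum
    have hleft : ∀ a, ∃ q, φ a = .inl q := by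
      intro a
      rcases hφa : φ a with q | s
      · exact ⟨q, rfl⟩
      · simpa [hφa, xUtil] using hsum a
    choose ψ hψ using hleft
    have := Fintype.card_le_of_injective ψ fun a b hab ↦ hφ (by rw [hψ, hψ, hab])
    simp only [Fintype.card_sum, Fintype.card_prod, Fintype.card_fin] at this
    have := t.isLt
    omega
  · exact ⟨s, rfl⟩

lemma sum_xUtil_add_le_of_propAgent (hφ : Injective φ)
    (hprop : ∀ a, propAgent (xUtil N M e) φ a) {g : Fin N → Fin M × Fin 3}
    (hg : ∀ i, φ (.inl i) = .inl (g i)) (i : Fin N) :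
    ∑ i', xUtil N M e (.inl i) (.inl (g i')) + T * C ≤
      (N + T) * xUtil N M e (.inl i) (.inl (g i)) := by
  choose σ hσ using exists_inr_of_propAgent hφ hprop
  simpa [Fintype.sum_sum_type, hg, hσ, xUtil] using sum_xUtil_le_of_propAgent (hprop (.inl i))

lemma owner_of_sum_xUtil_add_le {i : Fin N} {g : Fin N → Fin M × Fin 3}
    (h : ∑ i', xUtil N M e (.inl i) (.inl (g i')) + T * C ≤
      (N + T) * xUtil N M e (.inl i) (.inl (g i))) :
    e (g i).1 (g i).2 = i := by
  by_contra hown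
  have hN : 0 < N := by have := i.isLt; omega
  have hle : xUtil N M e (.inl i) (.inl (g i)) ≤ 6 * T := by
    rcases xUtil_of_not_owner hown with h0 | ⟨-, h6⟩ <;> omega
  have hC := mul_C_add_eq (M := M) hN
  generalize C = c at h hC
  have h2 : (N + T) * 2 * T ≤ 19 * T := by
    linarith [le_of_add_le_right h, Nat.mul_le_mul_left (N + T) hle]
  have := Nat.le_of_mul_le_mul_right h2 (by omega)
  omega

lemma sum_xUtil_le_of_owner {i : Fin N} {g : Fin N → Fin M × Fin 3}
    (h : ∑ i', xUtil N M e (.inl i) (.inl (g i')) + T * C ≤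
      (N + T) * xUtil N M e (.inl i) (.inl (g i)))
    (hown : e (g i).1 (g i).2 = i) :
    ∑ i', xUtil N M e (.inl i) (.inl (g i')) ≤ 19 * T := by
  have := mul_C_add_eq (M := M) (by have := i.isLt; omega : 0 < N)
  rw [xUtil_of_owner hown] at h
  omega

lemma sum_xUtil_eq_of_le (hinj : ∀ j, Injective (e j)) {g : Fin N → Fin M × Fin 3}
    (hle : ∀ i, ∑ i', xUtil N M e (.inl i) (.inl (g i')) ≤ 19 * T) (i : Fin N) :
    ∑ i', xUtil N M e (.inl i) (.inl (g i')) = 19 * T := by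
  have htotal : ∑ i, ∑ i', xUtil N M e (.inl i) (.inl (g i')) = ∑ _i : Fin N, 19 * T := by
    rw [sum_comm]
    exact sum_congr rfl fun i' _ ↦ sum_xUtil_house (hinj _)
  exact (sum_eq_sum_iff_of_le fun i _ ↦ hle i).1 htotal i (mem_univ i)

/-- The row of agent `e j (ℓ + 1)` contains `8T` and `6T - (j + 1)`; the remaining `5T + (j + 1)`
can only be one house `h^{ℓ+2}_j`, thanks to the tie-breaking terms `± (j + 1)`. -/
lemma add_two_mem_image (hinj : ∀ j, Injective (e j)) {g : Fin N → Fin M × Fin 3}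
    (hown : ∀ i, e (g i).1 (g i).2 = i)
    (hrow : ∀ i, ∑ i', xUtil N M e (.inl i) (.inl (g i')) = 19 * T)
    (j : Fin M) (ℓ : Fin 3) (h : (j, ℓ) ∈ univ.image g) : (j, ℓ + 2) ∈ univ.image g := by
  obtain ⟨i₀, -, hi₀⟩ := mem_image.1 h
  set i₁ := e j (ℓ + 1)
  set u := fun i' ↦ xUtil N M e (.inl i₁) (.inl (g i'))
  have hi₀₁ : i₀ ≠ i₁ := by
    have : e j ℓ = i₀ := by simpa [hi₀] using hown i₀
    exact this ▸ (hinj j).ne (by omega)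
  have hrest : ∑ i' ∈ (univ.erase i₁).erase i₀, u i' = 5 * T + (j.val + 1) := by
    have h₁ := add_sum_erase _ u (mem_univ i₁)
    rw [← add_sum_erase _ u (mem_erase.2 ⟨hi₀₁, mem_univ i₀⟩)] at h₁
    have hu₁ : u i₁ = 8 * T := xUtil_of_owner (hown i₁)
    have hu₀ : u i₀ = 6 * T - (j.val + 1) := by
      simp only [u, hi₀]
      exact xUtil_of_succ_owner (hinj j) ℓ
    have := j.isLt
    have : ∑ i', u i' = 19 * T := hrow i₁
    omega
  have hterm : ∀ i' ∈ (univ.erase i₁).erase i₀, u i' = 0 ∨ 5 * T + 1 ≤ u i' := by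
    intro i' hi'
    have hi'₁ : e (g i').1 (g i').2 ≠ i₁ := by
      rw [hown i']
      exact (mem_erase.1 (mem_of_mem_erase hi')).1
    rcases xUtil_of_not_owner hi'₁ with h0 | ⟨h5, -⟩
    exacts [.inl h0, .inr h5]
  obtain ⟨i₂, -, hi₂⟩ := exists_eq_sum_of_sum_lt_two_mul hterm
    (by have := j.isLt; omega) (by omega)
  rw [hrest] at hi₂
  obtain ⟨hj, hℓ⟩ := eq_of_xUtil_eq hi₂
  have : (g i₂).2 + 2 = ℓ + 1 := hinj j hℓ
  have hℓ₂ : (g i₂).2 = ℓ + 2 := by omega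
  exact mem_image.2 ⟨i₂, mem_univ _, Prod.ext hj hℓ₂⟩

end X3C

theorem proportional_to_x3c_general (N M : ℕ)
    (e : Fin M → Fin 3 → Fin N) (hinj : ∀ j, Function.Injective (e j))
    (hprop : ∃ φ : Fin N ⊕ Fin (100 * (M + N)) → (Fin M × Fin 3) ⊕ Fin (100 * (M + N)),
      Function.Injective φ ∧ ∀ a, propAgent (xUtil N M e) φ a) :
    ∃ P : Finset (Fin M), P.card = N / 3 ∧
      ∀ i : Fin N, ∃ j ∈ P, ∃ ℓ : Fin 3, e j ℓ = i := by
  obtain ⟨φ, hφ, hprop⟩ := hprop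
  choose g hg using hφ.exists_inl_of_forall_inr (exists_inr_of_propAgent hφ hprop)
  have hg_inj : Injective g := fun i i' h ↦ Sum.inl_injective (hφ (by rw [hg, hg, h]))
  have hle := sum_xUtil_add_le_of_propAgent hφ hprop hg
  have hown i := owner_of_sum_xUtil_add_le (hle i)
  have hrow := sum_xUtil_eq_of_le hinj fun i ↦ sum_xUtil_le_of_owner (hle i) (hown i)
  have hcard := card_eq_card_image_fst_mul (univ.image g) fun p hp ℓ ↦
    mk_mem_of_add_two_mem (add_two_mem_image hinj hown hrow) hp ℓ
  rw [card_image_of_injective _ hg_inj, card_univ, Fintype.card_fin, Fintype.card_fin] at hcard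
  refine ⟨(univ.image g).image Prod.fst, by omega, fun i ↦ ⟨(g i).1, ?_, (g i).2, hown i⟩⟩
  exact mem_image_of_mem _ (mem_image_of_mem _ (mem_univ i))

/-- If the X3C-reduction instance admits a proportional assignment, then some
`N/3` of the subsets cover the whole universe. -/
theorem proportional_to_x3c (N M : ℕ) (hN : 3 ∣ N)
    (e : Fin M → Fin 3 → Fin N) (hinj : ∀ j, Function.Injective (e j))
    (hprop : ∃ φ : Fin N ⊕ Fin (100 * (M + N)) → (Fin M × Fin 3) ⊕ Fin (100 * (M + N)),
      Function.Injective φ ∧ ∀ a, propAgent (xUtil N M e) φ a) :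
    ∃ P : Finset (Fin M), P.card = N / 3 ∧
      ∀ i : Fin N, ∃ j ∈ P, ∃ ℓ : Fin 3, e j ℓ = i :=
  proportional_to_x3c_general N M e hinj hprop
end

section
/- Consider the X3C-reduction house allocation instance constructed from an Exact 3-Set Cover instance, and suppose additionally that N + T > 3M. In any proportional assignment φ of this instance, the agents a*_1, ..., a*_T are assigned exactly the houses h*_1, ..., h*_T, i.e., φ({a*_1, ..., a*_T}) = {h*_1, ..., h*_T}. -/
/-- In any proportional assignment of the X3C-reduction instance (given
`N + T > 3M`), the dummy agents `a*_1, …, a*_T` receive exactly the dummy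
houses `h*_1, …, h*_T`. -/
theorem dummy_agents_get_dummy_houses (N M : ℕ) (hN : 3 ∣ N)
    (e : Fin M → Fin 3 → Fin N) (hinj : ∀ j, Function.Injective (e j))
    (hsize : N + 100 * (M + N) > 3 * M)
    (φ : Fin N ⊕ Fin (100 * (M + N)) → (Fin M × Fin 3) ⊕ Fin (100 * (M + N)))
    (hφ : Function.Injective φ)
    (hprop : ∀ a, propAgent (xUtil N M e) φ a) :
    Set.range (fun t : Fin (100 * (M + N)) => φ (Sum.inr t)) =
      Set.range (Sum.inr : Fin (100 * (M + N)) → (Fin M × Fin 3) ⊕ Fin (100 * (M + N))) := by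

  -- Step 1: some agent receives a dummy house
  have hex : ∃ a' j, φ a' = Sum.inr j := by
    by_contra h
    push_neg at h
    have hall : ∀ a', ∃ p, φ a' = Sum.inl p := by
      intro a'
      cases hφa : φ a' with
      | inl p => exact ⟨p, rfl⟩
      | inr j => exact absurd hφa (h a' j)
    choose ψ hψ using hall
    have hψinj : Function.Injective ψ := by
      intro x y hxy
      apply hφ
      rw [hψ x, hψ y, hxy]
    have hle := Fintype.card_le_of_injective ψ hψinj
    simp [Fintype.card_sum, Fintype.card_prod] at hle
    omega
  obtain ⟨a', j, hj⟩ := hex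
  -- Step 2: every dummy agent receives a dummy house
  have hdummy : ∀ t : Fin (100 * (M + N)), ∃ k, φ (Sum.inr t) = Sum.inr k := by
    intro t
    have hp := hprop (Sum.inr t)
    unfold propAgent at hp
    have hpos : (0:ℝ) < ∑ a'' : Fin N ⊕ Fin (100 * (M + N)), (xUtil N M e (Sum.inr t) (φ a'') : ℝ) := by
      have h1 : (xUtil N M e (Sum.inr t) (φ a') : ℝ) = 1 := by rw [hj]; simp [xUtil]
      have h2 := Finset.single_le_sum
        (f := fun a'' => (xUtil N M e (Sum.inr t) (φ a'') : ℝ))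
        (fun i _ => by positivity) (Finset.mem_univ a')
      rw [h1] at h2
      linarith
    have hcard : (0:ℝ) < (Fintype.card (Fin N ⊕ Fin (100 * (M + N))) : ℝ) := by
      have : 0 < N + 100 * (M + N) := by omega
      simp only [Fintype.card_sum, Fintype.card_fin]
      exact_mod_cast this
    have hmul : (0:ℝ) < (1 / (Fintype.card (Fin N ⊕ Fin (100 * (M + N))) : ℝ)) *
        ∑ a'' : Fin N ⊕ Fin (100 * (M + N)), (xUtil N M e (Sum.inr t) (φ a'') : ℝ) := by
      apply mul_pos
      · positivity
      · exact hpos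
    have hgt : (0:ℝ) < (xUtil N M e (Sum.inr t) (φ (Sum.inr t)) : ℝ) := lt_of_lt_of_le hmul hp
    cases hc : φ (Sum.inr t) with
    | inl p =>
      obtain ⟨p1, p2⟩ := p
      rw [hc] at hgt
      simp [xUtil] at hgt
    | inr k => exact ⟨k, rfl⟩
  choose g hg using hdummy
  have hginj : Function.Injective g := by
    intro x y hxy
    have : φ (Sum.inr x) = φ (Sum.inr y) := by rw [hg x, hg y, hxy]
    exact Sum.inr_injective (hφ this)
  have hgsurj : Function.Surjective g := Finite.surjective_of_injective hginj
  ext h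
  constructor
  · rintro ⟨t, rfl⟩
    exact ⟨g t, (hg t).symm⟩
  · rintro ⟨k, rfl⟩
    obtain ⟨t, ht⟩ := hgsurj k
    exact ⟨t, by show φ (Sum.inr t) = Sum.inr k; rw [hg t, ht]⟩
end

section
/- Consider the X3C-reduction house allocation instance constructed from an Exact 3-Set Cover instance. In any proportional assignment φ of this instance, every agent a_i with i ∈ [N] satisfies u_{a_i}(φ(a_i)) = 8T; equivalently, φ(a_i) = h^{ℓ_i}_{j_i} for indices such that e^{ℓ_i}_{j_i} = v_i. -/
/-- In any proportional assignment of the X3C-reduction instance, every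
element agent `a_i` has utility exactly `8T` for her assigned house;
equivalently, she receives a house `h^ℓ_j` with `e^ℓ_j = v_i`. -/
theorem element_agents_get_8T (N M : ℕ) (hN : 3 ∣ N)
    (e : Fin M → Fin 3 → Fin N) (hinj : ∀ j, Function.Injective (e j))
    (φ : Fin N ⊕ Fin (100 * (M + N)) → (Fin M × Fin 3) ⊕ Fin (100 * (M + N)))
    (hφ : Function.Injective φ)
    (hprop : ∀ a, propAgent (xUtil N M e) φ a) :
    ∀ i : Fin N,
      xUtil N M e (Sum.inl i) (φ (Sum.inl i)) = 8 * (100 * (M + N)) ∧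
      ∃ (j : Fin M) (ℓ : Fin 3), φ (Sum.inl i) = Sum.inl (j, ℓ) ∧ e j ℓ = i := by
  intro i
  have hN0 : 0 < N := i.pos
  have hcardA : Fintype.card (Fin N ⊕ Fin (100 * (M + N))) = N + 100 * (M + N) := by simp
  -- Step 1: every star agent gets a star house
  have hstar : ∀ k : Fin (100 * (M + N)), ∃ m : Fin (100 * (M + N)),
      φ (Sum.inr k) = Sum.inr m := by
    intro k
    rcases hx : φ (Sum.inr k) with x | m
    · exfalso
      have hP := hprop (Sum.inr k)
      unfold propAgent at hP
      rw [hx] at hP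
      have h0 : (xUtil N M e (Sum.inr k) (Sum.inl x) : ℝ) = 0 := by
        rcases x with ⟨j, ℓ⟩; simp [xUtil]
      rw [h0] at hP
      have hnn : ∀ a' ∈ (Finset.univ : Finset (Fin N ⊕ Fin (100 * (M + N)))),
          (0:ℝ) ≤ (xUtil N M e (Sum.inr k) (φ a') : ℝ) := fun _ _ => Nat.cast_nonneg _
      have hSnn : (0:ℝ) ≤ ∑ a' : Fin N ⊕ Fin (100 * (M + N)),
          (xUtil N M e (Sum.inr k) (φ a') : ℝ) := Finset.sum_nonneg hnn
      have hSle : ∑ a' : Fin N ⊕ Fin (100 * (M + N)),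
          (xUtil N M e (Sum.inr k) (φ a') : ℝ) ≤ 0 := by
        by_contra hc
        push_neg at hc
        have hcpos : (0:ℝ) < (Fintype.card (Fin N ⊕ Fin (100 * (M + N))) : ℝ) := by
          rw [hcardA]; positivity
        have : (0:ℝ) < (1 / (Fintype.card (Fin N ⊕ Fin (100 * (M + N))) : ℝ)) *
            ∑ a' : Fin N ⊕ Fin (100 * (M + N)), (xUtil N M e (Sum.inr k) (φ a') : ℝ) :=
          mul_pos (by positivity) hc
        linarith
      have hSz := le_antisymm hSle hSnn
      have hzero : ∀ a' : Fin N ⊕ Fin (100 * (M + N)),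
          xUtil N M e (Sum.inr k) (φ a') = 0 := by
        intro a'
        have := (Finset.sum_eq_zero_iff_of_nonneg hnn).mp hSz a' (Finset.mem_univ _)
        exact_mod_cast this
      have hall : ∀ a' : Fin N ⊕ Fin (100 * (M + N)), ∃ y, φ a' = Sum.inl y := by
        intro a'
        rcases hy : φ a' with y | m
        · exact ⟨y, rfl⟩
        · exfalso
          have := hzero a'
          rw [hy] at this
          simp [xUtil] at this
      choose f hf using hall
      have finj : Function.Injective f := by
        intro a b hab
        apply hφ
        rw [hf a, hf b, hab]
      have hle := Fintype.card_le_of_injective f finj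
      simp only [hcardA, Fintype.card_prod, Fintype.card_fin] at hle
      omega
    · exact ⟨m, rfl⟩
  choose g hg using hstar
  have ginj : Function.Injective g := by
    intro a b hab
    have : φ (Sum.inr a) = φ (Sum.inr b) := by rw [hg a, hg b, hab]
    simpa using hφ this
  have gsurj : Function.Surjective g := Finite.surjective_of_injective ginj
  -- Step 2: element agent i gets an element house
  obtain ⟨j, ℓ, hul⟩ : ∃ (j : Fin M) (ℓ : Fin 3), φ (Sum.inl i) = Sum.inl (j, ℓ) := by
    rcases hx : φ (Sum.inl i) with ⟨j, ℓ⟩ | m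
    · exact ⟨j, ℓ, rfl⟩
    · exfalso
      obtain ⟨k, hk⟩ := gsurj m
      have : φ (Sum.inl i) = φ (Sum.inr k) := by rw [hx, hg k, hk]
      exact absurd (hφ this) (by simp)
  -- Step 3: lower bound on the utility
  have hP := hprop (Sum.inl i)
  unfold propAgent at hP
  rw [Fintype.sum_sum_type] at hP
  have hinrval : ∀ k : Fin (100 * (M + N)),
      (xUtil N M e (Sum.inl i) (φ (Sum.inr k)) : ℝ)
        = ((8 * (100 * (M + N)) + 8 * N - 19 : ℕ) : ℝ) := by
    intro k
    rw [hg k]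
    rfl
  have hS2 : ∑ k : Fin (100 * (M + N)), (xUtil N M e (Sum.inl i) (φ (Sum.inr k)) : ℝ)
      = ((100 * (M + N) : ℕ) : ℝ) * ((8 * (100 * (M + N)) + 8 * N - 19 : ℕ) : ℝ) := by
    rw [Finset.sum_congr rfl (fun k _ => hinrval k)]
    simp [mul_comm]
  have hS1 : (0:ℝ) ≤ ∑ i' : Fin N, (xUtil N M e (Sum.inl i) (φ (Sum.inl i')) : ℝ) :=
    Finset.sum_nonneg fun _ _ => Nat.cast_nonneg _
  have hkey : (xUtil N M e (Sum.inl i) (φ (Sum.inl i)) : ℝ)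
      ≥ (1 / ((N + 100 * (M + N) : ℕ) : ℝ)) *
        (((100 * (M + N) : ℕ) : ℝ) * ((8 * (100 * (M + N)) + 8 * N - 19 : ℕ) : ℝ)) := by
    rw [hcardA, hS2] at hP
    calc (xUtil N M e (Sum.inl i) (φ (Sum.inl i)) : ℝ)
        ≥ (1 / ((N + 100 * (M + N) : ℕ) : ℝ)) *
          (∑ i' : Fin N, (xUtil N M e (Sum.inl i) (φ (Sum.inl i')) : ℝ)
           + ((100 * (M + N) : ℕ) : ℝ) *
             ((8 * (100 * (M + N)) + 8 * N - 19 : ℕ) : ℝ)) := hP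
      _ ≥ _ := by
          apply mul_le_mul_of_nonneg_left (by linarith) (by positivity)
  have hnatineq : 6 * (100 * (M + N)) * (N + 100 * (M + N))
      < 100 * (M + N) * (8 * (100 * (M + N)) + 8 * N - 19) := by
    have h1 : 6 * (N + 100 * (M + N)) < 8 * (100 * (M + N)) + 8 * N - 19 := by omega
    calc 6 * (100 * (M + N)) * (N + 100 * (M + N))
        = 100 * (M + N) * (6 * (N + 100 * (M + N))) := by ring
      _ < 100 * (M + N) * (8 * (100 * (M + N)) + 8 * N - 19) :=
          mul_lt_mul_of_pos_left h1 (by omega)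
  have hgtR : ((6 * (100 * (M + N)) : ℕ) : ℝ)
      < (xUtil N M e (Sum.inl i) (φ (Sum.inl i)) : ℝ) := by
    have hdiv : ((6 * (100 * (M + N)) : ℕ) : ℝ) <
        (1 / ((N + 100 * (M + N) : ℕ) : ℝ)) *
        (((100 * (M + N) : ℕ) : ℝ) * ((8 * (100 * (M + N)) + 8 * N - 19 : ℕ) : ℝ)) := by
      rw [one_div, inv_mul_eq_div,
        lt_div_iff₀ (by positivity : (0:ℝ) < ((N + 100 * (M + N) : ℕ) : ℝ))]
      exact_mod_cast hnatineq
    linarith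
  have hgt : 6 * (100 * (M + N)) < xUtil N M e (Sum.inl i) (φ (Sum.inl i)) := by
    exact_mod_cast hgtR
  -- Step 4: conclude
  rw [hul] at hgt ⊢
  have hval : xUtil N M e (Sum.inl i) (Sum.inl (j, ℓ)) =
      (if e j ℓ = i then 8 * (100 * (M + N))
       else if e j (ℓ + 1) = i then 6 * (100 * (M + N)) - (j.val + 1)
       else if e j (ℓ + 2) = i then 5 * (100 * (M + N)) + (j.val + 1)
       else 0) := rfl
  rw [hval] at hgt ⊢
  split_ifs at hgt ⊢ with h1 h2 h3
  · exact ⟨rfl, j, ℓ, rfl, h1⟩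
  · omega
  · have : j.val < M := j.isLt
    omega
  · omega
end
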